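/- arXiv:1704.04025 — 6 statements merged into one kernel-verified Lean document; each statement's English description precedes it below -/
import Mathlib

section
/- For odd positive integers w₁, w₂, all n ≥ 0 and a parameter x: Σ_{j=0}^{n} C(n,j) w₂^j w₁^{n-j} 𝓔_{n-j}(w₂ x | λ/w₁) · S̃_j(w₁ - 1 | λ/w₂) = Σ_{j=0}^{n} C(n,j) w₁^j w₂^{n-j} 𝓔_{n-j}(w₁ x | λ/w₂) · S̃_j(w₂ - 1 | λ/w₁). -/
/-!
Apply `T p = p(x + 1) + p(x)` to both sides; `T` is injective on polynomials in characteristic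
zero, since it doubles the leading coefficient. On the left side, `𝓔_m(y + 1|μ) + 𝓔_m(y|μ) =
2 (y|μ)_m` and an alternating telescoping over the odd length `w₂` turn
`𝓔_{n-j}(w₂x + w₂|λ/w₁) + 𝓔_{n-j}(w₂x|λ/w₁)` into `2 ∑_{m<w₂} (-1)^m (w₂x + m|λ/w₁)_{n-j}`.
Rescaling both degenerate falling factorials to the parameter `λ` and the binomial identity
`(x + y|μ)_n = ∑_j C(n,j) (x|μ)_j (y|μ)_{n-j}` then give
`2 ∑_{l<w₁} ∑_{m<w₂} (-1)^(l+m) (w₁w₂x + w₂l + w₁m|λ)_n`, which is symmetric in `w₁, w₂`.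
-/

open Polynomial Finset

noncomputable def dff {R : Type*} [CommRing R] (μ : R) (n : ℕ) : Polynomial R :=
  ∏ i ∈ Finset.range n, (Polynomial.X - Polynomial.C ((i : R) * μ))

/-- The degenerate alternating power sum `S̃_k(N|μ) = ∑_{l=0}^N (-1)^l (l|μ)_k`. -/
noncomputable def Stilde {R : Type*} [CommRing R] (μ : R) (k N : ℕ) : R :=
  ∑ l ∈ Finset.range (N + 1), (-1 : R) ^ l * (dff μ k).eval (l : R)

section
variable {R : Type*} [CommRing R]

theorem eval_dff_succ (μ x : R) (n : ℕ) :
    (dff μ (n + 1)).eval x = (dff μ n).eval x * (x - n * μ) := by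
  simp [dff, prod_range_succ]

theorem pow_mul_eval_dff (c μ x : R) (n : ℕ) :
    c ^ n * (dff μ n).eval x = (dff (c * μ) n).eval (c * x) := by
  induction n with
  | zero => simp [dff]
  | succ n ih => rw [eval_dff_succ, eval_dff_succ, ← ih]; ring

theorem eval_dff_add (μ x y : R) (n : ℕ) :
    (dff μ n).eval (x + y) =
      ∑ j ∈ range (n + 1), n.choose j * ((dff μ j).eval x * (dff μ (n - j)).eval y) := by
  induction n with
  | zero => simp [dff]
  | succ n ih =>
    rw [sum_choose_succ_mul (fun i j => (dff μ i).eval x * (dff μ j).eval y), eval_dff_succ, ih,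
      sum_mul, ← sum_add_distrib]
    refine sum_congr rfl fun i hi => ?_
    have hi : i ≤ n := Nat.lt_succ_iff.mp (mem_range.mp hi)
    rw [Nat.sub_add_comm hi, eval_dff_succ, eval_dff_succ, Nat.cast_sub hi]
    ring

theorem pow_mul_Stilde (c ν : R) (k N : ℕ) :
    c ^ k * Stilde ν k N = ∑ l ∈ range (N + 1), (-1) ^ l * (dff (c * ν) k).eval (c * l) := by
  simp only [Stilde, mul_sum, ← pow_mul_eval_dff]
  exact sum_congr rfl fun l _ => by ring

theorem Odd.add_eq_sum_neg_one_pow_mul (f : R → R) (y : R) {N : ℕ} (hN : Odd N) :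
    f (y + N) + f y = ∑ m ∈ range N, (-1) ^ m * (f (y + m + 1) + f (y + m)) := by
  have := sum_range_sub' (fun m => (-1 : R) ^ m * f (y + m)) N
  rw [hN.neg_one_pow, pow_zero, Nat.cast_zero, add_zero] at this
  calc f (y + N) + f y = 1 * f y - -1 * f (y + N) := by ring
    _ = _ := this.symm
    _ = _ := sum_congr rfl fun m _ => by rw [Nat.cast_succ, ← add_assoc, pow_succ]; ring

theorem Polynomial.eq_of_eval_add_one_add_eval [IsDomain R] [CharZero R]
    {p q : R[X]} (h : ∀ x, p.eval (x + 1) + p.eval x = q.eval (x + 1) + q.eval x) : p = q := by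
  set d := p - q
  have hd : taylor 1 d + d = 0 := funext fun x => by
    simp only [eval_add, taylor_eval, eval_sub, d, eval_zero]
    linear_combination h x
  have hlc : 2 * d.leadingCoeff = 0 := by
    simpa [coeff_taylor_natDegree, two_mul] using congrArg (coeff · d.natDegree) hd
  simpa [d, sub_eq_zero] using hlc

noncomputable def symmetricSum (E : ℕ → R[X]) (ν : R) (a b n : ℕ) : R[X] :=
  ∑ j ∈ range (n + 1),
    C ((n.choose j : R) * (b : R) ^ j * (a : R) ^ (n - j) * Stilde ν j (a - 1)) *
      (E (n - j)).comp (C (b : R) * X)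

theorem eval_add_one_add_eval_symmetricSum {E : ℕ → R[X]} {ν₁ ν₂ μ : R}
    (hE : ∀ m, (E m).comp (X + 1) + E m = 2 * dff ν₁ m) {a b : ℕ} (ha : 0 < a) (hb : Odd b)
    (h₁ : a * ν₁ = μ) (h₂ : b * ν₂ = μ) (n : ℕ) (x : R) :
    (symmetricSum E ν₂ a b n).eval (x + 1) + (symmetricSum E ν₂ a b n).eval x =
      ∑ l ∈ range a, ∑ m ∈ range b,
        (-1) ^ (l + m) * 2 * (dff μ n).eval (a * b * x + b * l + a * m) := by
  have hEval (k : ℕ) (y : R) : (E k).eval (y + 1) + (E k).eval y = 2 * (dff ν₁ k).eval y := by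
    simpa using congrArg (eval y) (hE k)
  have hTelescope (k : ℕ) : (a : R) ^ k * ((E k).eval (b * x + b) + (E k).eval (b * x)) =
      ∑ m ∈ range b, (-1) ^ m * 2 * (dff μ k).eval (a * b * x + a * m) := by
    rw [hb.add_eq_sum_neg_one_pow_mul (fun y => (E k).eval y), mul_sum]
    refine sum_congr rfl fun m _ => ?_
    rw [hEval, ← h₁, show (a : R) * b * x + a * m = a * (b * x + m) by ring, ← pow_mul_eval_dff]
    ring
  have hStilde (j : ℕ) : (b : R) ^ j * Stilde ν₂ j (a - 1) =
      ∑ l ∈ range a, (-1 : R) ^ l * (dff μ j).eval ((b : R) * l) := by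
    rw [pow_mul_Stilde, h₂, Nat.sub_add_cancel ha]
  calc _ = ∑ j ∈ range (n + 1), n.choose j * (((b : R) ^ j * Stilde ν₂ j (a - 1)) *
          ((a : R) ^ (n - j) * ((E (n - j)).eval (b * x + b) + (E (n - j)).eval (b * x)))) := by
        simp only [symmetricSum, eval_finsetSum, eval_mul, eval_C, eval_comp, eval_X, mul_add_one,
          ← sum_add_distrib]
        exact sum_congr rfl fun j _ => by ring
    _ = ∑ l ∈ range a, ∑ m ∈ range b, (-1) ^ (l + m) * 2 * ∑ j ∈ range (n + 1),
          (n.choose j : R) *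
            ((dff μ j).eval ((b : R) * l) * (dff μ (n - j)).eval (a * b * x + a * m)) := by
        simp_rw [hStilde, hTelescope, sum_mul_sum, mul_sum]
        rw [sum_comm]
        refine sum_congr rfl fun l _ => ?_
        rw [sum_comm]
        exact sum_congr rfl fun m _ => sum_congr rfl fun j _ => by ring
    _ = _ := by
        refine sum_congr rfl fun l _ => sum_congr rfl fun m _ => ?_
        rw [← eval_dff_add]
        ring_nf

end

theorem stmt6_general (E : RatFunc ℚ → ℕ → Polynomial (RatFunc ℚ))
    (hE : ∀ μ m, (E μ m).comp (Polynomial.X + 1) + E μ m = 2 * dff μ m)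
    (w₁ w₂ : ℕ) (hw₁ : Odd w₁) (hw₂ : Odd w₂)
    (n : ℕ) :
    ∑ j ∈ Finset.range (n + 1),
        Polynomial.C ((n.choose j : RatFunc ℚ) * (w₂ : RatFunc ℚ) ^ j *
            (w₁ : RatFunc ℚ) ^ (n - j) *
            Stilde (RatFunc.X / (w₂ : RatFunc ℚ)) j (w₁ - 1)) *
          (E (RatFunc.X / (w₁ : RatFunc ℚ)) (n - j)).comp
            (Polynomial.C (w₂ : RatFunc ℚ) * Polynomial.X) =
      ∑ j ∈ Finset.range (n + 1),
        Polynomial.C ((n.choose j : RatFunc ℚ) * (w₁ : RatFunc ℚ) ^ j *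
            (w₂ : RatFunc ℚ) ^ (n - j) *
            Stilde (RatFunc.X / (w₁ : RatFunc ℚ)) j (w₂ - 1)) *
          (E (RatFunc.X / (w₂ : RatFunc ℚ)) (n - j)).comp
            (Polynomial.C (w₁ : RatFunc ℚ) * Polynomial.X) := by
  have hw {w : ℕ} (hodd : Odd w) : (w : RatFunc ℚ) * (RatFunc.X / (w : RatFunc ℚ)) = RatFunc.X :=
    mul_div_cancel₀ _ (Nat.cast_ne_zero.mpr hodd.pos.ne')
  refine eq_of_eval_add_one_add_eval fun x => ?_
  calc _ = _ := eval_add_one_add_eval_symmetricSum (hE _) hw₁.pos hw₂ (hw hw₁) (hw hw₂) n x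
    _ = _ := by
        rw [sum_comm]
        refine sum_congr rfl fun l _ => sum_congr rfl fun m _ => ?_
        ring_nf
    _ = _ := (eval_add_one_add_eval_symmetricSum (hE _) hw₂.pos hw₁ (hw hw₂) (hw hw₁) n x).symm

/-- Symmetric identity (Theorem 2): for odd `w₁ w₂`,
`∑_j C(n,j) w₂^j w₁^{n-j} 𝓔_{n-j}(w₂x|λ/w₁) S̃_j(w₁-1|λ/w₂)
 = ∑_j C(n,j) w₁^j w₂^{n-j} 𝓔_{n-j}(w₁x|λ/w₂) S̃_j(w₂-1|λ/w₁)` in `ℚ(λ)[x]`. -/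
theorem stmt6 (E : RatFunc ℚ → ℕ → Polynomial (RatFunc ℚ))
    (hE : ∀ μ m, (E μ m).comp (Polynomial.X + 1) + E μ m = 2 * dff μ m)
    (w₁ w₂ : ℕ) (hw₁ : Odd w₁) (hw₂ : Odd w₂) (hw₁' : 0 < w₁) (hw₂' : 0 < w₂)
    (n : ℕ) :
    ∑ j ∈ Finset.range (n + 1),
        Polynomial.C ((n.choose j : RatFunc ℚ) * (w₂ : RatFunc ℚ) ^ j *
            (w₁ : RatFunc ℚ) ^ (n - j) *
            Stilde (RatFunc.X / (w₂ : RatFunc ℚ)) j (w₁ - 1)) *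
          (E (RatFunc.X / (w₁ : RatFunc ℚ)) (n - j)).comp
            (Polynomial.C (w₂ : RatFunc ℚ) * Polynomial.X) =
      ∑ j ∈ Finset.range (n + 1),
        Polynomial.C ((n.choose j : RatFunc ℚ) * (w₁ : RatFunc ℚ) ^ j *
            (w₂ : RatFunc ℚ) ^ (n - j) *
            Stilde (RatFunc.X / (w₁ : RatFunc ℚ)) j (w₂ - 1)) *
          (E (RatFunc.X / (w₂ : RatFunc ℚ)) (n - j)).comp
            (Polynomial.C (w₁ : RatFunc ℚ) * Polynomial.X) :=
  stmt6_general E hE w₁ w₂ hw₁ hw₂ n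
end

section
/- For every odd positive integer w₁ and every n ≥ 0: 𝓔_n(w₁ x | λ) = Σ_{j=0}^{n} C(n,j) w₁^{n-j} 𝓔_{n-j}(x | λ/w₁) · S̃_j(w₁ - 1 | λ). -/
open Polynomial Finset

/-! Writing `P(x) = 𝓔_n(w x|λ)`, the alternating sum over `l < w` of the defining relation taken
at `w x + l` telescopes, because `w` is odd, to `P(x+1) + P(x) = 2 ∑_{l<w} (-1)^l (w x + l|λ)_n`.
Expanding `(w x + l | w · λ/w)_n` by the Chu–Vandermonde identity for degenerate falling
factorials shows that the right-hand side satisfies the same relation, and `p ↦ p(x+1) + p(x)` is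
injective on polynomials since it doubles the leading coefficient. -/

section

variable {R : Type*} [CommRing R]

lemma dff_succ (μ : R) (n : ℕ) : dff μ (n + 1) = dff μ n * (X - C (n * μ)) :=
  prod_range_succ _ _

lemma dff_map {S : Type*} [CommRing S] (f : R →+* S) (μ : R) (n : ℕ) :
    (dff μ n).map f = dff (f μ) n := by
  simp [dff, Polynomial.map_prod]

lemma dff_eval_mul (c μ x : R) (n : ℕ) :
    (dff (c * μ) n).eval (c * x) = c ^ n * (dff μ n).eval x := by
  induction n with
  | zero => simp [dff]
  | succ n ih =>
    simp only [dff_succ, eval_mul, eval_sub, eval_X, eval_C, ih]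
    ring

theorem dff_eval_add (μ x y : R) (n : ℕ) :
    (dff μ n).eval (x + y) =
      ∑ ij ∈ antidiagonal n, n.choose ij.1 * ((dff μ ij.1).eval x * (dff μ ij.2).eval y) := by
  induction n with
  | zero => simp [dff]
  | succ n ih =>
    rw [sum_antidiagonal_choose_succ_mul (fun i j ↦ (dff μ i).eval x * (dff μ j).eval y),
      ← sum_add_distrib, dff_succ, eval_mul, ih, sum_mul]
    refine sum_congr rfl fun ij hij ↦ ?_
    rw [HasAntidiagonal.mem_antidiagonal] at hij
    rw [Nat.choose_symm_of_eq_add hij.symm]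
    simp only [dff_succ, eval_mul, eval_sub, eval_X, eval_C, ← hij, Nat.cast_add]
    ring

lemma dff_comp_C_mul_X_add_C (c μ a : R) (n : ℕ) :
    (dff (c * μ) n).comp (C c * X + C a) =
      ∑ j ∈ range (n + 1),
        C (n.choose j * (dff (c * μ) j).eval a * c ^ (n - j)) * dff μ (n - j) := by
  rw [comp, ← eval_map, dff_map, add_comm, dff_eval_add,
    Nat.sum_antidiagonal_eq_sum_range_succ_mk]
  refine sum_congr rfl fun j _ ↦ ?_
  have hx : (dff (C (c * μ)) j).eval (C a) = C ((dff (c * μ) j).eval a) := by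
    rw [← dff_map, eval_map, eval₂_at_apply]
  have hy : (dff (C (c * μ)) (n - j)).eval (C c * X) = C c ^ (n - j) * dff μ (n - j) := by
    rw [C_mul, dff_eval_mul, ← dff_map, eval_map, eval₂_C_X]
  rw [hx, hy, C_mul, C_mul, C_pow, map_natCast]
  ring

theorem comp_X_add_one_add_self_injective [IsDomain R] [NeZero (2 : R)] :
    Function.Injective fun p : R[X] ↦ p.comp (X + 1) + p := by
  intro p q h
  rw [← sub_eq_zero]
  set r := p - q
  have hr : r.comp (X + 1) + r = 0 := by
    simp only [r, sub_comp]; linear_combination h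
  have hX : (X + 1 : R[X]).natDegree = 1 := by simpa using natDegree_X_add_C (1 : R)
  have hmonic : (X + 1 : R[X]).Monic := by simpa using monic_X_add_C (1 : R)
  have hlc := congrArg (coeff · (r.natDegree * (X + 1 : R[X]).natDegree)) hr
  simp only [coeff_add, coeff_comp_degree_mul_degree (hX ▸ one_ne_zero)] at hlc
  rw [hmonic.leadingCoeff, one_pow, mul_one, hX, mul_one, coeff_natDegree, coeff_zero,
    ← two_mul, mul_eq_zero] at hlc
  exact leadingCoeff_eq_zero.mp (hlc.resolve_left two_ne_zero)

lemma sum_range_neg_one_pow_mul_add_of_odd (f : ℕ → R) {N : ℕ} (hN : Odd N) :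
    ∑ l ∈ range N, (-1) ^ l * (f (l + 1) + f l) = f N + f 0 := by
  have h : ∀ l, (-1) ^ l * (f (l + 1) + f l) = (-1) ^ l * f l - (-1) ^ (l + 1) * f (l + 1) := by
    intro l; ring
  simp only [h, sum_range_sub' (fun l ↦ (-1) ^ l * f l), hN.neg_one_pow]
  ring

lemma comp_C_mul_X_comp_X_add_one_add_self_of_odd {w : ℕ} (hw : Odd w) (p : R[X]) :
    (p.comp (C (w : R) * X)).comp (X + 1) + p.comp (C (w : R) * X) =
      ∑ l ∈ range w, (-1) ^ l * (p.comp (X + 1) + p).comp (C (w : R) * X + C (l : R)) := by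
  have hshift : ∀ l : ℕ, (p.comp (X + 1) + p).comp (C (w : R) * X + C (l : R)) =
      p.comp (C (w : R) * X + C ((l + 1 : ℕ) : R)) + p.comp (C (w : R) * X + C (l : R)) := by
    intro l
    simp only [add_comp, comp_assoc, X_comp, one_comp, Nat.cast_succ, C_add, C_1, add_assoc]
  simp only [hshift]
  rw [sum_range_neg_one_pow_mul_add_of_odd (fun l ↦ p.comp (C (w : R) * X + C (l : R))) hw]
  simp [comp_assoc, mul_add]

theorem comp_C_mul_X_eq_sum_of_odd [IsDomain R] [NeZero (2 : R)] {w : ℕ} (hw : Odd w)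
    {μ : R} {n : ℕ} {p : R[X]} {q : ℕ → R[X]} (hp : p.comp (X + 1) + p = 2 * dff (w * μ) n)
    (hq : ∀ m, (q m).comp (X + 1) + q m = 2 * dff μ m) :
    p.comp (C (w : R) * X) =
      ∑ j ∈ range (n + 1),
        C (n.choose j * (w : R) ^ (n - j) * Stilde (w * μ) j (w - 1)) * q (n - j) := by
  apply comp_X_add_one_add_self_injective
  simp only [Polynomial.sum_comp, mul_comp, C_comp, ← sum_add_distrib, ← mul_add, hq,
    comp_C_mul_X_comp_X_add_one_add_self_of_odd hw, hp, dff_comp_C_mul_X_add_C]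
  simp only [Stilde, Nat.sub_add_cancel hw.pos, mul_sum, sum_mul, map_sum]
  rw [sum_comm]
  refine sum_congr rfl fun j _ ↦ sum_congr rfl fun l _ ↦ ?_
  simp only [C_mul, C_pow, C_neg, C_1, map_natCast, ofNat_comp]
  ring

end

theorem stmt7_general (E : RatFunc ℚ → ℕ → Polynomial (RatFunc ℚ))
    (hE : ∀ μ m, (E μ m).comp (Polynomial.X + 1) + E μ m = 2 * dff μ m)
    (w₁ : ℕ) (hw₁ : Odd w₁) (n : ℕ) :
    (E (RatFunc.X : RatFunc ℚ) n).comp (Polynomial.C (w₁ : RatFunc ℚ) * Polynomial.X) =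
      ∑ j ∈ Finset.range (n + 1),
        Polynomial.C ((n.choose j : RatFunc ℚ) * (w₁ : RatFunc ℚ) ^ (n - j) *
            Stilde (RatFunc.X : RatFunc ℚ) j (w₁ - 1)) *
          (E (RatFunc.X / (w₁ : RatFunc ℚ)) (n - j)) := by
  have hcancel : (w₁ : RatFunc ℚ) * (RatFunc.X / (w₁ : RatFunc ℚ)) = RatFunc.X :=
    mul_div_cancel₀ _ (Nat.cast_ne_zero.mpr hw₁.pos.ne')
  have h := comp_C_mul_X_eq_sum_of_odd hw₁ (hcancel ▸ hE RatFunc.X n) (hE _)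
  rwa [hcancel] at h

/-- `𝓔_n(w₁ x|λ) = ∑_j C(n,j) w₁^{n-j} 𝓔_{n-j}(x|λ/w₁) S̃_j(w₁-1|λ)` for odd `w₁`. -/
theorem stmt7 (E : RatFunc ℚ → ℕ → Polynomial (RatFunc ℚ))
    (hE : ∀ μ m, (E μ m).comp (Polynomial.X + 1) + E μ m = 2 * dff μ m)
    (w₁ : ℕ) (hw₁ : Odd w₁) (hw₁' : 0 < w₁) (n : ℕ) :
    (E (RatFunc.X : RatFunc ℚ) n).comp (Polynomial.C (w₁ : RatFunc ℚ) * Polynomial.X) =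
      ∑ j ∈ Finset.range (n + 1),
        Polynomial.C ((n.choose j : RatFunc ℚ) * (w₁ : RatFunc ℚ) ^ (n - j) *
            Stilde (RatFunc.X : RatFunc ℚ) j (w₁ - 1)) *
          (E (RatFunc.X / (w₁ : RatFunc ℚ)) (n - j)) :=
  stmt7_general E hE w₁ hw₁ n
end

section
/- (Multiplication-type distribution formula) For every odd positive integer w₁ and all n ≥ 0: w₁^n · Σ_{i=0}^{w₁-1} (-1)^i 𝓔_n(x + i/w₁ | λ/w₁) = 𝓔_n(w₁ x | λ). -/
open Polynomial Finset

/-!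
Both sides satisfy `P(x + 1/w₁) + P(x) = 2 w₁ⁿ (x | λ/w₁)ₙ`: on the left the alternating sum
telescopes to `𝓔ₙ(x | λ/w₁) + 𝓔ₙ(x + 1 | λ/w₁)` because `w₁` is odd, and on the right the defining
relation of `𝓔ₙ(· | λ)` is rescaled by `x ↦ w₁ x`. A polynomial with `P(x + c) + P(x) = 0` is zero,
since its leading coefficient would equal its own negative.
-/

namespace Polynomial

variable {R : Type*} [CommRing R]

theorem eq_zero_of_taylor_add_self_eq_zero [IsAddTorsionFree R] {c : R} {p : R[X]}
    (h : taylor c p + p = 0) : p = 0 := by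
  have hlc : 2 • p.leadingCoeff = 0 := by
    rw [two_nsmul, ← neg_eq_iff_add_eq_zero, ← leadingCoeff_neg, ← eq_neg_of_add_eq_zero_left h,
      leadingCoeff_taylor]
  rw [← leadingCoeff_eq_zero]
  exact nsmul_right_injective two_ne_zero (hlc.trans (smul_zero 2).symm)

theorem taylor_comp_C_mul_X (p : R[X]) (w c : R) :
    taylor c (p.comp (C w * X)) = (taylor (w * c) p).comp (C w * X) := by
  simp only [taylor_apply, comp_assoc, mul_comp, C_comp, X_comp, add_comp, C_mul, mul_add]

theorem taylor_alternating_sum_add_self (p : R[X]) (h : R) {m : ℕ} (hm : Odd m) :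
    taylor h (∑ i ∈ range m, C ((-1) ^ i) * taylor (i * h) p) +
        ∑ i ∈ range m, C ((-1) ^ i) * taylor (i * h) p =
      p + taylor (m * h) p := by
  set g : ℕ → R[X] := fun i => C ((-1) ^ i) * taylor (i * h) p
  have hstep : ∀ i, taylor h (g i) + g i = g i - g (i + 1) := by
    intro i
    simp only [g, taylor_mul, taylor_C, taylor_taylor, pow_succ, C_mul, C_neg, C_1]
    push_cast
    ring_nf
  rw [map_sum, ← sum_add_distrib]
  simp only [hstep, sum_range_sub', g, hm.neg_one_pow]
  simp

end Polynomial

theorem dff_comp_C_mul_X {R : Type*} [CommRing R] (μ w : R) (n : ℕ) :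
    (dff (w * μ) n).comp (C w * X) = C (w ^ n) * dff μ n := by
  rw [dff, dff, Polynomial.prod_comp, C_pow, show C w ^ n = ∏ _i ∈ range n, C w by simp, ← prod_mul_distrib]
  refine prod_congr rfl fun i _ => ?_
  simp only [sub_comp, X_comp, C_comp, mul_sub, ← C_mul]
  ring_nf

theorem stmt8_general (E : RatFunc ℚ → ℕ → Polynomial (RatFunc ℚ))
    (hE : ∀ μ m, (E μ m).comp (Polynomial.X + 1) + E μ m = 2 * dff μ m)
    (w₁ : ℕ) (hw₁ : Odd w₁) (n : ℕ) :
    Polynomial.C ((w₁ : RatFunc ℚ) ^ n) *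
        ∑ i ∈ Finset.range w₁, Polynomial.C ((-1 : RatFunc ℚ) ^ i) *
          (E (RatFunc.X / (w₁ : RatFunc ℚ)) n).comp
            (Polynomial.X + Polynomial.C ((i : RatFunc ℚ) / (w₁ : RatFunc ℚ))) =
      (E (RatFunc.X : RatFunc ℚ) n).comp
        (Polynomial.C (w₁ : RatFunc ℚ) * Polynomial.X) := by
  set w : RatFunc ℚ := (w₁ : RatFunc ℚ)
  set μ := RatFunc.X / w
  have hw : w ≠ 0 := Nat.cast_ne_zero.mpr hw₁.pos.ne'
  have hE' : ∀ μ m, taylor 1 (E μ m) + E μ m = 2 * dff μ m := by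
    simpa only [taylor_apply, C_1] using hE
  have hμ : RatFunc.X = w * μ := (mul_div_cancel₀ _ hw).symm
  simp only [← taylor_apply, div_eq_mul_inv]
  rw [← sub_eq_zero]
  refine eq_zero_of_taylor_add_self_eq_zero (c := w⁻¹) ?_
  rw [map_sub, sub_add_sub_comm, sub_eq_zero, taylor_mul, taylor_C, ← mul_add,
    taylor_alternating_sum_add_self _ _ hw₁, mul_inv_cancel₀ hw, add_comm, hE',
    taylor_comp_C_mul_X, mul_inv_cancel₀ hw, ← add_comp, hE', mul_comp, hμ, dff_comp_C_mul_X]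
  simp only [ofNat_comp]
  ring

/-- Multiplication-type distribution formula:
`w₁^n ∑_{i=0}^{w₁-1} (-1)^i 𝓔_n(x + i/w₁ | λ/w₁) = 𝓔_n(w₁ x | λ)` for odd `w₁`. -/
theorem stmt8 (E : RatFunc ℚ → ℕ → Polynomial (RatFunc ℚ))
    (hE : ∀ μ m, (E μ m).comp (Polynomial.X + 1) + E μ m = 2 * dff μ m)
    (w₁ : ℕ) (hw₁ : Odd w₁) (hw₁' : 0 < w₁) (n : ℕ) :
    Polynomial.C ((w₁ : RatFunc ℚ) ^ n) *
        ∑ i ∈ Finset.range w₁, Polynomial.C ((-1 : RatFunc ℚ) ^ i) *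
          (E (RatFunc.X / (w₁ : RatFunc ℚ)) n).comp
            (Polynomial.X + Polynomial.C ((i : RatFunc ℚ) / (w₁ : RatFunc ℚ))) =
      (E (RatFunc.X : RatFunc ℚ) n).comp
        (Polynomial.C (w₁ : RatFunc ℚ) * Polynomial.X) :=
  stmt8_general E hE w₁ hw₁ n
end

section
/- For odd positive integers w₁, w₂ and all n ≥ 0: w₁^n Σ_{i=0}^{w₁-1} (-1)^i 𝓔_n(w₂ x + (w₂/w₁)i | λ/w₁) = w₂^n Σ_{i=0}^{w₂-1} (-1)^i 𝓔_n(w₁ x + (w₁/w₂)i | λ/w₂). -/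
/-!
`P ↦ P(x+1) + P(x)` doubles the leading coefficient, so it is injective on polynomials and
`𝓔_n(·|ν)` is determined by its difference equation. For odd `m`, alternating telescoping and
`(mx|ν)_n = mⁿ (x|ν/m)_n` show that `mⁿ ∑_{j<m} (-1)^j 𝓔_n(x + j/m | ν/m)` satisfies the equation
of `𝓔_n(mx|ν)`, which gives a multiplication formula. Applied with `m = w₂` at `x + i/w₁`, it
turns the left-hand side into a double sum over `i < w₁`, `j < w₂` of
`(w₁w₂)ⁿ (-1)^(i+j) 𝓔_n(x + i/w₁ + j/w₂ | λ/(w₁w₂))`, which is symmetric in `w₁` and `w₂`.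
-/

open Polynomial Finset

section CommRing

variable {R : Type*} [CommRing R]

theorem comp_X_add_one_add_self_injective_s9 [NoZeroDivisors R] [NeZero (2 : R)] :
    Function.Injective fun P : R[X] => P.comp (X + 1) + P := by
  intro P Q h
  rw [← sub_eq_zero]
  set D := P - Q
  have hD : taylor 1 D + D = 0 := by
    simp only [D, taylor_apply, map_one, sub_comp]
    linear_combination h
  have hlc : 2 * D.leadingCoeff = 0 := by
    simpa [coeff_taylor_natDegree, two_mul] using congrArg (coeff · D.natDegree) hD
  exact leadingCoeff_eq_zero.mp ((mul_eq_zero.mp hlc).resolve_left two_ne_zero)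

theorem comp_X_add_C_comp_X_add_one (P : R[X]) (c : R) :
    (P.comp (X + C c)).comp (X + 1) = (P.comp (X + 1)).comp (X + C c) := by
  simp only [comp_assoc, add_comp, X_comp, C_comp, one_comp]
  ring_nf

theorem add_comp_X_add_C_of_odd {P Q : R[X]} (h : P.comp (X + 1) + P = Q) {m : ℕ}
    (hm : Odd m) :
    P.comp (X + C (m : R)) + P = ∑ k ∈ range m, C ((-1) ^ k) * Q.comp (X + C (k : R)) := by
  have step (k : ℕ) : C ((-1) ^ k) * Q.comp (X + C (k : R)) =
      C ((-1) ^ k) * P.comp (X + C (k : R)) -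
        C ((-1) ^ (k + 1)) * P.comp (X + C ((k + 1 : ℕ) : R)) := by
    rw [← h, add_comp, comp_assoc]
    simp only [add_comp, X_comp, one_comp, Nat.cast_succ, C_add, C_1, pow_succ, C_mul, C_neg]
    rw [add_assoc]
    ring
  rw [sum_congr rfl fun k _ => step k, sum_range_sub', hm.neg_one_pow]
  simp [add_comm]

theorem C_mul_X_comp_X_add_C (a c : R) : (C a * X).comp (X + C c) = C a * X + C (a * c) := by
  rw [mul_comp, C_comp, X_comp, mul_add, C_mul]

theorem dff_mul_comp_C_mul_X (a μ : R) (n : ℕ) :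
    (dff (a * μ) n).comp (C a * X) = C (a ^ n) * dff μ n := by
  have factor (i : ℕ) :
      (X - C ((i : R) * (a * μ))).comp (C a * X) = C a * (X - C ((i : R) * μ)) := by
    simp only [sub_comp, X_comp, C_comp, mul_sub, ← C_mul]
    ring_nf
  simp only [dff, Polynomial.prod_comp, factor, prod_mul_distrib, prod_const, card_range, C_pow]

end CommRing

section Field

variable {K : Type*} [Field K]

theorem comp_C_mul_X_eq_sum [NeZero (2 : K)] {ν : K} {m n : ℕ} (hm : Odd m) (hm0 : (m : K) ≠ 0)
    {P Q : K[X]} (hP : P.comp (X + 1) + P = 2 * dff ν n)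
    (hQ : Q.comp (X + 1) + Q = 2 * dff (ν / m) n) :
    P.comp (C (m : K) * X) =
      C ((m : K) ^ n) * ∑ j ∈ range m, C ((-1) ^ j) * Q.comp (X + C ((j : K) / m)) := by
  have hdff (j : ℕ) : (dff ν n).comp (C (m : K) * X + C (j : K)) =
      C ((m : K) ^ n) * (dff (ν / m) n).comp (X + C ((j : K) / m)) := by
    have hx : C (m : K) * X + C (j : K) = (C (m : K) * X).comp (X + C ((j : K) / m)) := by
      rw [C_mul_X_comp_X_add_C, mul_div_cancel₀ _ hm0]
    have hν : dff ν n = dff (m * (ν / m)) n := by rw [mul_div_cancel₀ _ hm0]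
    rw [hx, ← comp_assoc, hν, dff_mul_comp_C_mul_X, mul_comp, C_comp]
  apply comp_X_add_one_add_self_injective_s9
  calc (P.comp (C (m : K) * X)).comp (X + 1) + P.comp (C (m : K) * X)
      = (P.comp (X + C (m : K)) + P).comp (C (m : K) * X) := by
        simp only [comp_assoc, add_comp, mul_comp, X_comp, C_comp]
        ring_nf
    _ = 2 * ∑ j ∈ range m, C ((-1) ^ j) * (dff ν n).comp (C (m : K) * X + C (j : K)) := by
        rw [add_comp_X_add_C_of_odd hP hm]
        simp [mul_sum, comp_assoc, mul_left_comm]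
    _ = C ((m : K) ^ n) *
          ∑ j ∈ range m, C ((-1) ^ j) * (Q.comp (X + 1) + Q).comp (X + C ((j : K) / m)) := by
        simp only [hdff, hQ, mul_sum, mul_comp, ofNat_comp]
        exact sum_congr rfl fun j _ => by ring
    _ = _ := by
        simp only [mul_comp, C_comp, Polynomial.sum_comp, add_comp, comp_X_add_C_comp_X_add_one,
          mul_add, sum_add_distrib]

theorem C_pow_mul_sum_comp_eq_double_sum [NeZero (2 : K)] {ν : K} {a b n : ℕ} (hb : Odd b)
    (hb0 : (b : K) ≠ 0)
    {P Q : K[X]} (hP : P.comp (X + 1) + P = 2 * dff ν n)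
    (hQ : Q.comp (X + 1) + Q = 2 * dff (ν / b) n) :
    C ((a : K) ^ n) * ∑ i ∈ range a, C ((-1) ^ i) * P.comp (C (b : K) * X + C ((b : K) / a * i)) =
      ∑ i ∈ range a, ∑ j ∈ range b,
        C (((a : K) * b) ^ n * (-1) ^ (i + j)) * Q.comp (X + C ((i : K) / a + (j : K) / b)) := by
  rw [mul_sum]
  refine sum_congr rfl fun i _ => ?_
  rw [mul_comm_div, ← C_mul_X_comp_X_add_C, ← comp_assoc, comp_C_mul_X_eq_sum hb hb0 hP hQ,
    mul_comp, C_comp, Polynomial.sum_comp, mul_sum, mul_sum, mul_sum]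
  refine sum_congr rfl fun j _ => ?_
  simp only [mul_comp, C_comp, comp_assoc, add_comp, X_comp, C_add, add_assoc, map_mul, mul_pow,
    pow_add]
  ring

end Field

theorem stmt9_general (E : RatFunc ℚ → ℕ → Polynomial (RatFunc ℚ))
    (hE : ∀ μ m, (E μ m).comp (Polynomial.X + 1) + E μ m = 2 * dff μ m)
    (w₁ w₂ : ℕ) (hw₁ : Odd w₁) (hw₂ : Odd w₂)
    (n : ℕ) :
    Polynomial.C ((w₁ : RatFunc ℚ) ^ n) *
        ∑ i ∈ Finset.range w₁, Polynomial.C ((-1 : RatFunc ℚ) ^ i) *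
          (E (RatFunc.X / (w₁ : RatFunc ℚ)) n).comp
            (Polynomial.C (w₂ : RatFunc ℚ) * Polynomial.X +
              Polynomial.C ((w₂ : RatFunc ℚ) / (w₁ : RatFunc ℚ) * (i : RatFunc ℚ))) =
      Polynomial.C ((w₂ : RatFunc ℚ) ^ n) *
        ∑ i ∈ Finset.range w₂, Polynomial.C ((-1 : RatFunc ℚ) ^ i) *
          (E (RatFunc.X / (w₂ : RatFunc ℚ)) n).comp
            (Polynomial.C (w₁ : RatFunc ℚ) * Polynomial.X +
              Polynomial.C ((w₁ : RatFunc ℚ) / (w₂ : RatFunc ℚ) * (i : RatFunc ℚ))) := by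
  have hw₁0 : (w₁ : RatFunc ℚ) ≠ 0 := Nat.cast_ne_zero.mpr hw₁.pos.ne'
  have hw₂0 : (w₂ : RatFunc ℚ) ≠ 0 := Nat.cast_ne_zero.mpr hw₂.pos.ne'
  rw [C_pow_mul_sum_comp_eq_double_sum hw₂ hw₂0 (hE _ _) (hE _ _),
    C_pow_mul_sum_comp_eq_double_sum hw₁ hw₁0 (hE _ _) (hE _ _), sum_comm, div_right_comm]
  refine sum_congr rfl fun i _ => sum_congr rfl fun j _ => ?_
  rw [mul_comm (w₁ : RatFunc ℚ), add_comm i, add_comm ((i : RatFunc ℚ) / _)]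

/-- Corollary 5: for odd `w₁ w₂`,
`w₁^n ∑_{i<w₁} (-1)^i 𝓔_n(w₂x + (w₂/w₁)i | λ/w₁)
 = w₂^n ∑_{i<w₂} (-1)^i 𝓔_n(w₁x + (w₁/w₂)i | λ/w₂)` in `ℚ(λ)[x]`. -/
theorem stmt9 (E : RatFunc ℚ → ℕ → Polynomial (RatFunc ℚ))
    (hE : ∀ μ m, (E μ m).comp (Polynomial.X + 1) + E μ m = 2 * dff μ m)
    (w₁ w₂ : ℕ) (hw₁ : Odd w₁) (hw₂ : Odd w₂) (hw₁' : 0 < w₁) (hw₂' : 0 < w₂)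
    (n : ℕ) :
    Polynomial.C ((w₁ : RatFunc ℚ) ^ n) *
        ∑ i ∈ Finset.range w₁, Polynomial.C ((-1 : RatFunc ℚ) ^ i) *
          (E (RatFunc.X / (w₁ : RatFunc ℚ)) n).comp
            (Polynomial.C (w₂ : RatFunc ℚ) * Polynomial.X +
              Polynomial.C ((w₂ : RatFunc ℚ) / (w₁ : RatFunc ℚ) * (i : RatFunc ℚ))) =
      Polynomial.C ((w₂ : RatFunc ℚ) ^ n) *
        ∑ i ∈ Finset.range w₂, Polynomial.C ((-1 : RatFunc ℚ) ^ i) *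
          (E (RatFunc.X / (w₂ : RatFunc ℚ)) n).comp
            (Polynomial.C (w₁ : RatFunc ℚ) * Polynomial.X +
              Polynomial.C ((w₁ : RatFunc ℚ) / (w₂ : RatFunc ℚ) * (i : RatFunc ℚ))) :=
  stmt9_general E hE w₁ w₂ hw₁ hw₂ n
end

section
/- (Classical specialization of Theorem 2) For odd positive integers w₁, w₂ and all n ≥ 0: Σ_{j=0}^{n} C(n,j) w₂^j w₁^{n-j} E_{n-j}(w₂x) T_j(w₁-1) = Σ_{j=0}^{n} C(n,j) w₁^j w₂^{n-j} E_{n-j}(w₁x) T_j(w₂-1), where T_j(N) = Σ_{l=0}^{N} (-1)^l l^j is the alternating power sum (with the convention 0^0 = 1). -/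
/-!
Write `Φ_u p = p(X + u) + p` (`shiftAdd u` below). These operators commute, and `Φ_u` is injective because it doubles
the leading coefficient. Applying `Φ_{1/w₂}` to the left-hand side turns every `E_{n-j}(w₂x)` into
`2 (w₂x)^{n-j}`, and the binomial theorem collapses the result to
`2 ∑_{l<w₁} (-1)^l (w₁w₂x + w₂l)^n`. Applying `Φ_{1/w₁}` then telescopes this alternating sum,
since `w₁` is odd, to `2 Φ_1 ((w₁w₂x)^n)`, which is symmetric in `w₁` and `w₂`.
-/

open Polynomial Finset

/-- Alternating power sum `T_j(N) = ∑_{l=0}^N (-1)^l l^j` (with `0^0 = 1`). -/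
def altPowerSum (j N : ℕ) : ℚ :=
  ∑ l ∈ Finset.range (N + 1), (-1 : ℚ) ^ l * (l : ℚ) ^ j

namespace Polynomial

variable {R : Type*}

noncomputable def shiftAdd [Semiring R] (u : R) : R[X] →ₗ[R] R[X] :=
  taylor u + LinearMap.id

lemma shiftAdd_apply [Semiring R] (u : R) (p : R[X]) : shiftAdd u p = taylor u p + p :=
  rfl

lemma shiftAdd_comm [CommSemiring R] (u v : R) (p : R[X]) :
    shiftAdd u (shiftAdd v p) = shiftAdd v (shiftAdd u p) := by
  simp only [shiftAdd_apply, map_add, taylor_taylor, add_comm u v]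
  abel

lemma shiftAdd_injective [Ring R] [IsAddTorsionFree R] (u : R) :
    Function.Injective (shiftAdd u) := by
  rw [← LinearMap.ker_eq_bot, LinearMap.ker_eq_bot']
  intro p hp
  have hneg : taylor u p = -p := eq_neg_of_add_eq_zero_left hp
  have hlc := congrArg leadingCoeff hneg
  rw [leadingCoeff_taylor, leadingCoeff_neg] at hlc
  exact leadingCoeff_eq_zero.mp (self_eq_neg.mp hlc)

lemma shiftAdd_comp_C_mul_X [CommSemiring R] (u b : R) (p : R[X]) :
    shiftAdd u (p.comp (C b * X)) = (shiftAdd (b * u) p).comp (C b * X) := by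
  simp only [shiftAdd_apply, taylor_apply, add_comp, comp_assoc, mul_comp, C_comp, X_comp, C_mul]
  ring_nf

lemma shiftAdd_sum_neg_one_pow_smul_taylor [CommRing R] {a : ℕ} (ha : Odd a) (h : R)
    (g : R[X]) :
    shiftAdd h (∑ l ∈ range a, (-1 : R) ^ l • taylor (l * h) g) = shiftAdd (a * h) g := by
  set F : ℕ → R[X] := fun l ↦ (-1 : R) ^ l • taylor (l * h) g
  have hstep (l : ℕ) : shiftAdd h ((-1 : R) ^ l • taylor (l * h) g) = F l - F (l + 1) := by
    simp only [F, map_smul, shiftAdd_apply, taylor_taylor, pow_succ, Nat.cast_succ]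
    rw [add_comm h, ← add_one_mul]
    module
  rw [map_sum, sum_congr rfl fun l _ ↦ hstep l, sum_range_sub']
  simp only [F, pow_zero, Nat.cast_zero, zero_mul, taylor_zero, one_smul, ha.neg_one_pow,
    neg_one_smul, sub_neg_eq_add, shiftAdd_apply, add_comm g]

end Polynomial

noncomputable def eulerSide (E : ℕ → ℚ[X]) (a b n : ℕ) : ℚ[X] :=
  ∑ j ∈ range (n + 1),
    C ((n.choose j : ℚ) * (b : ℚ) ^ j * (a : ℚ) ^ (n - j) * altPowerSum j (a - 1)) *
      (E (n - j)).comp (C (b : ℚ) * X)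

lemma taylor_C_mul_X_pow {K : Type*} [Field K] (a b : K) (l n : ℕ) (ha : a ≠ 0) :
    taylor (l * a⁻¹) ((C (a * b) * X) ^ n) = (C (b * l) + C (a * b) * X) ^ n := by
  rw [taylor_pow, taylor_apply, mul_comp, C_comp, X_comp, mul_add, ← C_mul, add_comm]
  congr 3
  field_simp

lemma sum_choose_mul_altPowerSum (a b n : ℕ) (ha : a ≠ 0) :
    ∑ j ∈ range (n + 1),
        C ((n.choose j : ℚ) * (b : ℚ) ^ j * (a : ℚ) ^ (n - j) * altPowerSum j (a - 1)) *
          (C (b : ℚ) * X) ^ (n - j) =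
      ∑ l ∈ range a, (-1 : ℚ) ^ l • taylor (l * (a : ℚ)⁻¹) ((C ((a : ℚ) * b) * X) ^ n) := by
  simp only [taylor_C_mul_X_pow (K := ℚ) _ _ _ _ (Nat.cast_ne_zero.mpr ha), add_pow, smul_sum,
    altPowerSum, Nat.sub_add_cancel (Nat.one_le_iff_ne_zero.mpr ha), mul_sum, map_sum, sum_mul]
  rw [sum_comm]
  refine sum_congr rfl fun l _ ↦ sum_congr rfl fun j _ ↦ ?_
  simp only [C_mul, C_pow, mul_pow, smul_eq_C_mul, C_neg, C_1, map_natCast]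
  ring

lemma shiftAdd_eulerSide (E : ℕ → ℚ[X]) (hE : ∀ m, (E m).comp (X + 1) + E m = 2 * X ^ m)
    {a b : ℕ} (ha : a ≠ 0) (hb : b ≠ 0) (n : ℕ) :
    shiftAdd (b : ℚ)⁻¹ (eulerSide E a b n) =
      (2 : ℚ) •
        ∑ l ∈ range a, (-1 : ℚ) ^ l • taylor (l * (a : ℚ)⁻¹) ((C ((a : ℚ) * b) * X) ^ n) := by
  have hshift (m : ℕ) : shiftAdd (b : ℚ)⁻¹ ((E m).comp (C (b : ℚ) * X)) =
      (2 : ℚ) • (C (b : ℚ) * X) ^ m := by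
    rw [shiftAdd_comp_C_mul_X, mul_inv_cancel₀ (Nat.cast_ne_zero.mpr hb), shiftAdd_apply,
      taylor_apply, C_1, hE, mul_comp, pow_comp, X_comp, ofNat_comp, smul_eq_C_mul, C_ofNat]
    norm_cast
  rw [← sum_choose_mul_altPowerSum a b n ha, eulerSide, map_sum, smul_sum]
  refine sum_congr rfl fun j _ ↦ ?_
  rw [C_mul' _ ((E (n - j)).comp _), map_smul, hshift, smul_comm,
    C_mul' _ ((C (b : ℚ) * X) ^ (n - j))]

lemma shiftAdd_shiftAdd_eulerSide (E : ℕ → ℚ[X])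
    (hE : ∀ m, (E m).comp (X + 1) + E m = 2 * X ^ m) {a b : ℕ} (ha : Odd a) (hb : b ≠ 0)
    (n : ℕ) :
    shiftAdd (a : ℚ)⁻¹ (shiftAdd (b : ℚ)⁻¹ (eulerSide E a b n)) =
      (2 : ℚ) • shiftAdd 1 ((C ((a : ℚ) * b) * X) ^ n) := by
  rw [shiftAdd_eulerSide E hE ha.pos.ne' hb, map_smul, shiftAdd_sum_neg_one_pow_smul_taylor ha,
    mul_inv_cancel₀ (Nat.cast_ne_zero.mpr ha.pos.ne')]

theorem stmt16_general (E : ℕ → Polynomial ℚ)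
    (hE : ∀ n, (E n).comp (Polynomial.X + 1) + E n = 2 * Polynomial.X ^ n)
    (w₁ w₂ : ℕ) (hw₁ : Odd w₁) (hw₂ : Odd w₂)
    (n : ℕ) :
    ∑ j ∈ Finset.range (n + 1),
        Polynomial.C ((n.choose j : ℚ) * (w₂ : ℚ) ^ j * (w₁ : ℚ) ^ (n - j) *
            altPowerSum j (w₁ - 1)) *
          (E (n - j)).comp (Polynomial.C (w₂ : ℚ) * Polynomial.X) =
      ∑ j ∈ Finset.range (n + 1),
        Polynomial.C ((n.choose j : ℚ) * (w₁ : ℚ) ^ j * (w₂ : ℚ) ^ (n - j) *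
            altPowerSum j (w₂ - 1)) *
          (E (n - j)).comp (Polynomial.C (w₁ : ℚ) * Polynomial.X) := by
  show eulerSide E w₁ w₂ n = eulerSide E w₂ w₁ n
  apply shiftAdd_injective (w₂ : ℚ)⁻¹
  apply shiftAdd_injective (w₁ : ℚ)⁻¹
  rw [shiftAdd_shiftAdd_eulerSide E hE hw₁ hw₂.pos.ne', shiftAdd_comm (w₁ : ℚ)⁻¹,
    shiftAdd_shiftAdd_eulerSide E hE hw₂ hw₁.pos.ne', mul_comm (w₂ : ℚ)]

/-- Classical specialization of Theorem 2: for odd `w₁ w₂`,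
`∑_j C(n,j) w₂^j w₁^{n-j} E_{n-j}(w₂x) T_j(w₁-1)
 = ∑_j C(n,j) w₁^j w₂^{n-j} E_{n-j}(w₁x) T_j(w₂-1)`. -/
theorem stmt16 (E : ℕ → Polynomial ℚ)
    (hE : ∀ n, (E n).comp (Polynomial.X + 1) + E n = 2 * Polynomial.X ^ n)
    (w₁ w₂ : ℕ) (hw₁ : Odd w₁) (hw₂ : Odd w₂) (hw₁' : 0 < w₁) (hw₂' : 0 < w₂)
    (n : ℕ) :
    ∑ j ∈ Finset.range (n + 1),
        Polynomial.C ((n.choose j : ℚ) * (w₂ : ℚ) ^ j * (w₁ : ℚ) ^ (n - j) *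
            altPowerSum j (w₁ - 1)) *
          (E (n - j)).comp (Polynomial.C (w₂ : ℚ) * Polynomial.X) =
      ∑ j ∈ Finset.range (n + 1),
        Polynomial.C ((n.choose j : ℚ) * (w₁ : ℚ) ^ j * (w₂ : ℚ) ^ (n - j) *
            altPowerSum j (w₂ - 1)) *
          (E (n - j)).comp (Polynomial.C (w₁ : ℚ) * Polynomial.X) :=
  stmt16_general E hE w₁ w₂ hw₁ hw₂ n
end

section
/- The p-adic fermionic integral of f(x) = (-1)^x type sums: for a continuous function f on ℤ_p (p an odd prime), the fermionic integral I(f) = lim_{N→∞} Σ_{x=0}^{p^N - 1} f(x)(-1)^x exists, and satisfies I(f(·+1)) + I(f) = 2 f(0). -/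
/-!
Since `p` is odd, `(-1)^(a + p^N b) = (-1)^(a + b)`, and an odd number of alternating signs sums
to `1`. Hence the difference of the partial sums at `p^n` and `p^N` (`n ≥ N`) is an alternating sum of
the increments `f(a + p^N b) - f(a)`, which are uniformly small by uniform continuity of `f` on the
compact space `ℤ_p`; the ultrametric inequality bounds the whole sum by the largest increment, so
the partial sums form a Cauchy sequence. The functional equation comes from the telescoping identity
`∑_{x<n} (-1)^x (f(x+1) + f(x)) = f(0) + f(n)` for odd `n`, together with `p^N → 0` in `ℤ_p`.
-/

open Finset Filter Topology

theorem Finset.sum_range_mul_eq_sum_sum {M : Type*} [AddCommMonoid M] (g : ℕ → M) (m k : ℕ) :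
    ∑ x ∈ range (m * k), g x = ∑ b ∈ range k, ∑ a ∈ range m, g (a + m * b) := by
  induction k with
  | zero => simp
  | succ k ih =>
    rw [Nat.mul_succ, sum_range_add, ih, sum_range_succ]
    simp only [add_comm]

theorem PadicInt.tendsto_p_pow_atTop_nhds_zero (p : ℕ) [Fact p.Prime] :
    Tendsto (fun N : ℕ => (p : ℤ_[p]) ^ N) atTop (𝓝 0) := by
  refine tendsto_pow_atTop_nhds_zero_of_norm_lt_one ?_
  rw [PadicInt.norm_p]
  exact inv_lt_one_of_one_lt₀ (by exact_mod_cast (Fact.out : p.Prime).one_lt)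

section FermionicSum

def fermionicSum {E : Type*} [Ring E] (g : ℕ → E) (n : ℕ) : E :=
  ∑ x ∈ range n, (-1) ^ x * g x

variable {E : Type*}

theorem fermionicSum_mul_sub [Ring E] (g : ℕ → E) {m k : ℕ} (hm : Odd m) (hk : Odd k) :
    fermionicSum g (m * k) - fermionicSum g m =
      ∑ b ∈ range k, ∑ a ∈ range m, (-1) ^ (a + b) * (g (a + m * b) - g a) := by
  have hlong : fermionicSum g (m * k) =
      ∑ b ∈ range k, ∑ a ∈ range m, (-1) ^ (a + b) * g (a + m * b) := by
    rw [fermionicSum, sum_range_mul_eq_sum_sum]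
    refine sum_congr rfl fun b _ => sum_congr rfl fun a _ => ?_
    rw [pow_add, pow_add, pow_mul, hm.neg_one_pow]
  have hshort : fermionicSum g m = ∑ b ∈ range k, ∑ a ∈ range m, (-1) ^ (a + b) * g a := by
    have hsigns : ∑ b ∈ range k, (-1 : E) ^ b = 1 := by
      rw [neg_one_geom_sum, if_neg (Nat.not_even_iff_odd.2 hk)]
    calc fermionicSum g m = ∑ b ∈ range k, (-1) ^ b * fermionicSum g m := by
          rw [← sum_mul, hsigns, one_mul]
      _ = _ := by
          refine sum_congr rfl fun b _ => ?_
          rw [fermionicSum, mul_sum]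
          exact sum_congr rfl fun a _ => by rw [pow_add, (Commute.neg_one_left _).pow_pow, mul_assoc]
  rw [hlong, hshort, ← sum_sub_distrib]
  refine sum_congr rfl fun b _ => ?_
  rw [← sum_sub_distrib]
  simp only [mul_sub]

theorem norm_fermionicSum_mul_sub_le [NormedRing E] [NormOneClass E] [IsUltrametricDist E]
    (g : ℕ → E) {m k : ℕ} (hm : Odd m) (hk : Odd k) {ε : ℝ} (hε : 0 ≤ ε)
    (hg : ∀ a b, ‖g (a + m * b) - g a‖ ≤ ε) :
    ‖fermionicSum g (m * k) - fermionicSum g m‖ ≤ ε := by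
  rw [fermionicSum_mul_sub g hm hk]
  refine IsUltrametricDist.norm_sum_le_of_forall_le_of_nonneg hε fun b _ => ?_
  refine IsUltrametricDist.norm_sum_le_of_forall_le_of_nonneg hε fun a _ => ?_
  calc ‖(-1 : E) ^ (a + b) * (g (a + m * b) - g a)‖
      ≤ ‖(-1 : E)‖ ^ (a + b) * ‖g (a + m * b) - g a‖ :=
        (norm_mul_le _ _).trans (mul_le_mul_of_nonneg_right (norm_pow_le _ _) (norm_nonneg _))
    _ ≤ ε := by rw [norm_neg, norm_one, one_pow, one_mul]; exact hg a b

theorem fermionicSum_shift_add [Ring E] (g : ℕ → E) {n : ℕ} (hn : Odd n) :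
    fermionicSum (fun x => g (x + 1)) n + fermionicSum g n = g 0 + g n := by
  have hshift : fermionicSum (fun x => g (x + 1)) n = g 0 - fermionicSum g (n + 1) := by
    rw [fermionicSum, fermionicSum, sum_range_succ', eq_sub_iff_add_eq, ← add_assoc,
      ← sum_add_distrib]
    simp only [pow_succ, pow_zero, mul_neg_one, neg_mul, add_neg_cancel, sum_const_zero, one_mul,
      zero_add]
  rw [hshift, fermionicSum, sum_range_succ, hn.neg_one_pow, ← fermionicSum]
  noncomm_ring

end FermionicSum

theorem cauchySeq_fermionicSum_p_pow (p : ℕ) [Fact p.Prime] (hp : Odd p) {E : Type*}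
    [NormedRing E] [NormOneClass E] [IsUltrametricDist E] {f : ℤ_[p] → E}
    (hf : UniformContinuous f) :
    CauchySeq fun N : ℕ => fermionicSum (fun x => f x) (p ^ N) := by
  rw [Metric.cauchySeq_iff']
  intro ε hε
  obtain ⟨δ, hδ, hδf⟩ := Metric.uniformContinuous_iff.mp hf (ε / 2) (half_pos hε)
  obtain ⟨N, hN⟩ := ((PadicInt.tendsto_p_pow_atTop_nhds_zero p).eventually
    (Metric.ball_mem_nhds 0 hδ)).exists_forall_of_atTop
  refine ⟨N, fun n hn => ?_⟩
  have hsplit : p ^ n = p ^ N * p ^ (n - N) := by rw [← pow_add, Nat.add_sub_cancel' hn]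
  have hclose : ∀ a b : ℕ, ‖f ((a + p ^ N * b : ℕ) : ℤ_[p]) - f (a : ℤ_[p])‖ ≤ ε / 2 := by
    intro a b
    rw [← dist_eq_norm]
    refine (hδf ?_).le
    calc dist ((a + p ^ N * b : ℕ) : ℤ_[p]) (a : ℤ_[p]) = ‖(p : ℤ_[p]) ^ N * b‖ := by
          rw [dist_eq_norm]; push_cast; ring_nf
      _ ≤ ‖(p : ℤ_[p]) ^ N‖ := by
          rw [norm_mul]; exact mul_le_of_le_one_right (norm_nonneg _) (PadicInt.norm_le_one _)
      _ < δ := by simpa using hN N le_rfl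
  rw [dist_eq_norm, hsplit]
  exact (norm_fermionicSum_mul_sub_le _ hp.pow hp.pow (half_pos hε).le hclose).trans_lt
    (half_lt_self hε)

/-- For an odd prime `p` and a continuous `f : ℤ_p → ℚ_p`, the fermionic `p`-adic
integral `I(f) = lim_N ∑_{x=0}^{p^N-1} (-1)^x f(x)` exists, the integral of the
translate `f(·+1)` exists, and `I(f(·+1)) + I(f) = 2 f(0)`. -/
theorem stmt18 (p : ℕ) [Fact p.Prime] (hp : Odd p)
    (f : ℤ_[p] → ℚ_[p]) (hf : Continuous f) :
    ∃ I J : ℚ_[p],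
      Tendsto (fun N : ℕ => ∑ x ∈ Finset.range (p ^ N), (-1 : ℚ_[p]) ^ x * f (x : ℤ_[p]))
        atTop (𝓝 I) ∧
      Tendsto (fun N : ℕ =>
          ∑ x ∈ Finset.range (p ^ N), (-1 : ℚ_[p]) ^ x * f ((x : ℤ_[p]) + 1))
        atTop (𝓝 J) ∧
      J + I = 2 * f 0 := by
  have hf₁ : Continuous fun z : ℤ_[p] => f (z + 1) := hf.comp (continuous_add_const 1)
  obtain ⟨I, hI⟩ := cauchySeq_tendsto_of_complete
    (cauchySeq_fermionicSum_p_pow p hp (CompactSpace.uniformContinuous_of_continuous hf))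
  obtain ⟨J, hJ⟩ := cauchySeq_tendsto_of_complete
    (cauchySeq_fermionicSum_p_pow p hp (CompactSpace.uniformContinuous_of_continuous hf₁))
  refine ⟨I, J, hI, hJ, ?_⟩
  have hpair : ∀ N : ℕ, fermionicSum (fun x => f ((x : ℤ_[p]) + 1)) (p ^ N) +
      fermionicSum (fun x => f x) (p ^ N) = f 0 + f ((p : ℤ_[p]) ^ N) := fun N => by
    simpa using fermionicSum_shift_add (fun x => f (x : ℤ_[p])) (hp.pow (n := N))
  have hlim : Tendsto (fun N : ℕ => f 0 + f ((p : ℤ_[p]) ^ N)) atTop (𝓝 (f 0 + f 0)) :=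
    tendsto_const_nhds.add ((hf.tendsto 0).comp (PadicInt.tendsto_p_pow_atTop_nhds_zero p))
  rw [tendsto_nhds_unique ((hJ.add hI).congr hpair) hlim, two_mul]
end
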